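/- arXiv:1506.03286 — 5 statements merged into one kernel-verified Lean document; each statement's English description precedes it below -/
import Mathlib

section
/- Let d be a complex number, and let f₂ be the polynomial in three complex variables x, y, z given by f₂ = x⁴y³ + 2zx²y⁴ + z²y⁵ + (d−1)x⁵y + (2d²+4d−2)zx³y² + (2d²+3d−1)z²xy³ + (d³−d²−d)zx⁴ + (d⁴+4d³+d²)z²x²y + (d³+d²+d)z³y² + (d⁵+3d⁴+3d³+d²)z³x. Then for every real number λ > 6/11 and every open neighborhood U of the origin in ℂ³, the function (x,y,z) ↦ |f₂(x,y,z)|^{−2λ} is not integrable on U with respect to Lebesgue measure on ℂ³ ≅ ℝ⁶. -/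
/-!
`f₂` is quasi-homogeneous: `f₂ (t²x, ty, t³z) = t¹¹ f₂ (x, y, z)`, while this weighted dilation
multiplies Lebesgue measure on `ℂ³ ≅ ℝ⁶` by `t^(2(2+1+3)) = t¹²`. Take a small closed ball `B`,
away from `{x = 0}`, on which `0 < |f₂| ≤ M`. Its dilates by `t = t₀ 2⁻ⁿ` are pairwise disjoint and
lie in any given neighbourhood of the origin for `t₀` small, and on each of them the integral of
`|f₂|^(-2λ)` is at least `t¹² (t¹¹ M)^(-2λ) vol B ≥ M^(-2λ) vol B` as soon as `12 ≤ 22 λ`.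
Infinitely many such pieces make the integral diverge.
-/

open Function MeasureTheory Metric Topology
open scoped ENNReal

theorem not_integrableOn_of_pairwise_disjoint {α E : Type*} [MeasurableSpace α]
    [NormedAddCommGroup E] {μ : Measure α} {g : α → E} {U : Set α} {S : ℕ → Set α}
    {C : ℝ≥0∞} (hC : C ≠ 0) (hS : ∀ n, MeasurableSet (S n))
    (hdisj : Pairwise (Disjoint on S)) (hSU : ∀ n, S n ⊆ U)
    (hle : ∀ n, C ≤ ∫⁻ x in S n, ‖g x‖ₑ ∂μ) :
    ¬ IntegrableOn g U μ := by
  intro hg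
  have hfin : ∫⁻ x in ⋃ n, S n, ‖g x‖ₑ ∂μ < ⊤ := (hg.mono_set (Set.iUnion_subset hSU)).2
  rw [lintegral_iUnion hS hdisj] at hfin
  refine hfin.ne (top_le_iff.1 ?_)
  calc ⊤ = ∑' _ : ℕ, C := (ENNReal.tsum_const_eq_top_of_ne_zero hC).symm
    _ ≤ _ := ENNReal.tsum_le_tsum hle

theorem rpow_le_mul_rpow_mul_pow {t M s : ℝ} {D k : ℕ} (ht0 : 0 < t) (ht1 : t ≤ 1)
    (hM : 0 ≤ M) (h : k + D * s ≤ 0) : M ^ s ≤ (t ^ D * M) ^ s * t ^ k := by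
  have key : 1 ≤ (t ^ D) ^ s * t ^ k := by
    rw [← Real.rpow_natCast t D, ← Real.rpow_natCast t k, ← Real.rpow_mul ht0.le,
      ← Real.rpow_add ht0]
    exact Real.one_le_rpow_of_pos_of_le_one_of_nonpos ht0 ht1 (by linarith)
  calc M ^ s = 1 * M ^ s := (one_mul _).symm
    _ ≤ (t ^ D) ^ s * t ^ k * M ^ s := by gcongr
    _ = (t ^ D * M) ^ s * t ^ k := by
      rw [Real.mul_rpow (by positivity) hM]; ring

theorem exists_ne_zero_and_fst_ne_zero {Y : Type*} [TopologicalSpace Y] {f : ℂ × Y → ℂ}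
    (hf : Continuous f) (hne : f ≠ 0) : ∃ q, f q ≠ 0 ∧ q.1 ≠ 0 := by
  have hdense : Dense {q : ℂ × Y | q.1 ≠ 0} :=
    (dense_compl_singleton (0 : ℂ)).preimage isOpenMap_fst
  obtain ⟨q, hq⟩ := Function.ne_iff.1 hne
  exact hdense.inter_open_nonempty _ (isOpen_ne_fun hf continuous_const) ⟨q, hq⟩

theorem exists_closedBall_forall_ne_zero_norm_le {Y : Type*} [PseudoMetricSpace Y]
    {f : ℂ × Y → ℂ} (hf : Continuous f) (hne : f ≠ 0) :
    ∃ q r M, 0 < r ∧ 3 * r < ‖q.1‖ ∧ 0 < M ∧ ∀ p ∈ closedBall q r, f p ≠ 0 ∧ ‖f p‖ ≤ M := by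
  obtain ⟨q, hfq, hq1⟩ := exists_ne_zero_and_fst_ne_zero hf hne
  have hev : ∀ᶠ p in 𝓝 q, f p ≠ 0 ∧ ‖f p‖ ≤ 2 * ‖f q‖ :=
    ((hf.tendsto q).eventually (ball_mem_nhds (f q) (norm_pos_iff.2 hfq))).mono fun p hp => by
      rw [dist_eq_norm] at hp
      refine ⟨fun h0 => by simp [h0] at hp, ?_⟩
      linarith [norm_le_insert' (f p) (f q)]
  obtain ⟨r, hr0, hr⟩ := nhds_basis_closedBall.eventually_iff.1 hev
  have hq1' := norm_pos_iff.2 hq1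
  exact ⟨q, min r (‖q.1‖ / 4), 2 * ‖f q‖, by positivity,
    by linarith [min_le_right r (‖q.1‖ / 4)], by have := norm_pos_iff.2 hfq; positivity,
    fun p hp => hr (closedBall_subset_closedBall (min_le_left _ _) hp)⟩

/-- Instance search does not unfold `volume` on the nested product. -/
instance : (volume : Measure (ℂ × ℂ × ℂ)).IsAddHaarMeasure :=
  have : (volume : Measure (ℂ × ℂ)).IsAddHaarMeasure := Measure.prod.instIsAddHaarMeasure _ _
  Measure.prod.instIsAddHaarMeasure _ _

noncomputable def weightedDilation (a b c : ℕ) (t : ℝ) : (ℂ × ℂ × ℂ) →ₗ[ℝ] ℂ × ℂ × ℂ :=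
  ((t ^ a) • LinearMap.id).prodMap (((t ^ b) • LinearMap.id).prodMap ((t ^ c) • LinearMap.id))

section WeightedDilation

variable {a b c : ℕ} {t : ℝ}

@[simp] theorem weightedDilation_apply (p : ℂ × ℂ × ℂ) :
    weightedDilation a b c t p = (t ^ a • p.1, t ^ b • p.2.1, t ^ c • p.2.2) := rfl

theorem det_weightedDilation :
    LinearMap.det (weightedDilation a b c t) = t ^ (2 * (a + b + c)) := by
  simp only [weightedDilation, LinearMap.det_prodMap, LinearMap.det_smul, LinearMap.det_id,
    Complex.finrank_real_complex]
  ring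

theorem volume_image_weightedDilation (ht : 0 ≤ t) (s : Set (ℂ × ℂ × ℂ)) :
    volume (weightedDilation a b c t '' s) =
      ENNReal.ofReal (t ^ (2 * (a + b + c))) * volume s := by
  rw [Measure.addHaar_image_linearMap, det_weightedDilation, abs_of_nonneg (by positivity)]

theorem norm_weightedDilation_le (ha : a ≠ 0) (hb : b ≠ 0) (hc : c ≠ 0) (ht0 : 0 ≤ t)
    (ht1 : t ≤ 1) (p : ℂ × ℂ × ℂ) : ‖weightedDilation a b c t p‖ ≤ t * ‖p‖ := by
  have hsmul : ∀ {n : ℕ} (x : ℂ), n ≠ 0 → ‖x‖ ≤ ‖p‖ → ‖t ^ n • x‖ ≤ t * ‖p‖ := fun x hn hx => by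
    rw [norm_smul, Real.norm_of_nonneg (by positivity)]
    exact mul_le_mul (pow_le_of_le_one ht0 ht1 hn) hx (norm_nonneg _) ht0
  simp only [weightedDilation_apply, Prod.norm_def, max_le_iff]
  exact ⟨hsmul _ ha (norm_fst_le p), hsmul _ hb ((norm_fst_le p.2).trans (norm_snd_le p)),
    hsmul _ hc ((norm_snd_le p.2).trans (norm_snd_le p))⟩

theorem image_closedBall_weightedDilation_subset (ha : a ≠ 0) (hb : b ≠ 0) (hc : c ≠ 0)
    (ht0 : 0 ≤ t) (ht1 : t ≤ 1) (q : ℂ × ℂ × ℂ) (r : ℝ) :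
    weightedDilation a b c t '' closedBall q r ⊆ closedBall 0 (t * (‖q‖ + r)) := by
  rintro _ ⟨x, hx, rfl⟩
  rw [mem_closedBall_zero_iff]
  calc ‖weightedDilation a b c t x‖ ≤ t * ‖x‖ := norm_weightedDilation_le ha hb hc ht0 ht1 x
    _ ≤ t * (‖q‖ + r) := by
      gcongr
      linarith [norm_le_insert' x q, mem_closedBall_iff_norm.1 hx]

theorem norm_fst_weightedDilation (ht : 0 ≤ t) (p : ℂ × ℂ × ℂ) :
    ‖(weightedDilation a b c t p).1‖ = t ^ a * ‖p.1‖ := by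
  rw [weightedDilation_apply, norm_smul, Real.norm_of_nonneg (by positivity)]

/-- The norms of the first coordinates on the two images lie in disjoint intervals. -/
theorem disjoint_image_closedBall_weightedDilation (ha : a ≠ 0) {q : ℂ × ℂ × ℂ} {r s : ℝ}
    (hr : 3 * r < ‖q.1‖) (hs : 0 < s) (hst : 2 * s ≤ t) :
    Disjoint (weightedDilation a b c s '' closedBall q r)
      (weightedDilation a b c t '' closedBall q r) := by
  rw [Set.disjoint_left]
  rintro _ ⟨x, hx, rfl⟩ ⟨y, hy, hxy⟩
  have hfst : t ^ a * ‖y.1‖ = s ^ a * ‖x.1‖ := by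
    rw [← norm_fst_weightedDilation (hs.le.trans (by linarith)), hxy,
      norm_fst_weightedDilation hs.le]
  have hfst_close : ∀ z ∈ closedBall q r, |‖z.1‖ - ‖q.1‖| ≤ r := fun z hz =>
    (abs_norm_sub_norm_le _ _).trans ((norm_fst_le (z - q)).trans (mem_closedBall_iff_norm.1 hz))
  have hx1 := (abs_le.1 (hfst_close x hx)).2
  have hy1 := (abs_le.1 (hfst_close y hy)).1
  have hsa : 2 * s ^ a ≤ t ^ a := calc
    2 * s ^ a ≤ 2 ^ a * s ^ a := by gcongr; exact le_self_pow₀ one_le_two ha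
    _ = (2 * s) ^ a := (mul_pow _ _ _).symm
    _ ≤ t ^ a := by gcongr
  nlinarith [pow_pos hs a, norm_nonneg x.1]

end WeightedDilation

theorem le_setLIntegral_norm_rpow_image_weightedDilation {f : ℂ × ℂ × ℂ → ℂ} {a b c D : ℕ}
    (hhom : ∀ t : ℝ, 0 < t → ∀ p, f (weightedDilation a b c t p) = (t : ℂ) ^ D * f p)
    {lam : ℝ} (hlam0 : 0 ≤ lam) (hlam : (a + b + c : ℝ) ≤ lam * D)
    {t : ℝ} (ht0 : 0 < t) (ht1 : t ≤ 1) {B : Set (ℂ × ℂ × ℂ)}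
    (hBm : MeasurableSet (weightedDilation a b c t '' B)) {M : ℝ} (hM : 0 ≤ M)
    (hB : ∀ p ∈ B, f p ≠ 0 ∧ ‖f p‖ ≤ M) :
    ENNReal.ofReal (M ^ (-2 * lam)) * volume B ≤
      ∫⁻ p in weightedDilation a b c t '' B, ‖‖f p‖ ^ (-2 * lam)‖ₑ := by
  have hpt : ∀ p ∈ weightedDilation a b c t '' B,
      ENNReal.ofReal ((t ^ D * M) ^ (-2 * lam)) ≤ ‖‖f p‖ ^ (-2 * lam)‖ₑ := by
    rintro _ ⟨x, hx, rfl⟩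
    have hnorm : ‖f (weightedDilation a b c t x)‖ = t ^ D * ‖f x‖ := by
      rw [hhom t ht0, norm_mul, norm_pow, Complex.norm_real, Real.norm_of_nonneg ht0.le]
    have hfx : 0 < ‖f x‖ := norm_pos_iff.2 (hB x hx).1
    rw [Real.enorm_eq_ofReal (by positivity), hnorm]
    exact ENNReal.ofReal_le_ofReal
      (Real.rpow_le_rpow_of_nonpos (by positivity) (by gcongr; exact (hB x hx).2) (by linarith))
  calc ENNReal.ofReal (M ^ (-2 * lam)) * volume B
      ≤ ENNReal.ofReal ((t ^ D * M) ^ (-2 * lam) * t ^ (2 * (a + b + c))) * volume B := by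
        gcongr
        exact rpow_le_mul_rpow_mul_pow ht0 ht1 hM (by push_cast; linarith)
    _ = ENNReal.ofReal ((t ^ D * M) ^ (-2 * lam)) * volume (weightedDilation a b c t '' B) := by
        rw [volume_image_weightedDilation ht0.le, ENNReal.ofReal_mul (by positivity), mul_assoc]
    _ = ∫⁻ _ in weightedDilation a b c t '' B, ENNReal.ofReal ((t ^ D * M) ^ (-2 * lam)) :=
        (setLIntegral_const _ _).symm
    _ ≤ _ := setLIntegral_mono' hBm hpt

theorem not_integrableOn_norm_rpow_of_weightedHomogeneous {f : ℂ × ℂ × ℂ → ℂ}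
    (hf : Continuous f) (hne : f ≠ 0) {a b c D : ℕ} (ha : a ≠ 0) (hb : b ≠ 0) (hc : c ≠ 0)
    (hhom : ∀ t : ℝ, 0 < t → ∀ p, f (weightedDilation a b c t p) = (t : ℂ) ^ D * f p)
    {lam : ℝ} (hlam : (a + b + c : ℝ) ≤ lam * D) {U : Set (ℂ × ℂ × ℂ)} (hU : U ∈ 𝓝 0) :
    ¬ IntegrableOn (fun p => ‖f p‖ ^ (-2 * lam)) U := by
  have hlam0 : 0 ≤ lam := by
    by_contra! h
    have : (0 : ℝ) < a := Nat.cast_pos.2 (Nat.pos_of_ne_zero ha)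
    nlinarith [(Nat.cast_nonneg D : (0 : ℝ) ≤ D), (Nat.cast_nonneg b : (0 : ℝ) ≤ b),
      (Nat.cast_nonneg c : (0 : ℝ) ≤ c)]
  obtain ⟨q, r, M, hr0, hr, hM, hB⟩ := exists_closedBall_forall_ne_zero_norm_le hf hne
  obtain ⟨ε, hε0, hεU⟩ := Metric.mem_nhds_iff.1 hU
  set t₀ := min 1 (ε / (2 * (‖q‖ + r)))
  have ht₀0 : 0 < t₀ := by positivity
  set t : ℕ → ℝ := fun n => t₀ * 2⁻¹ ^ n with ht
  have ht0 : ∀ n, 0 < t n := fun n => by positivity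
  have ht₀t : ∀ n, t n ≤ t₀ := fun n =>
    mul_le_of_le_one_right ht₀0.le (pow_le_one₀ (by norm_num) (by norm_num))
  have ht1 : ∀ n, t n ≤ 1 := fun n => (ht₀t n).trans (min_le_left _ _)
  have hstep : ∀ m n, m < n → 2 * t n ≤ t m := fun m n hmn => by
    have := pow_le_pow_of_le_one (by norm_num : (0 : ℝ) ≤ 2⁻¹) (by norm_num) hmn
    simp only [ht, pow_succ] at this ⊢
    nlinarith
  have hmeas : ∀ n, MeasurableSet (weightedDilation a b c (t n) '' closedBall q r) := fun n =>
    ((isCompact_closedBall q r).image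
      (LinearMap.continuous_of_finiteDimensional _)).isClosed.measurableSet
  refine not_integrableOn_of_pairwise_disjoint
    (S := fun n => weightedDilation a b c (t n) '' closedBall q r)
    (C := ENNReal.ofReal (M ^ (-2 * lam)) * volume (closedBall q r))
    ?_ hmeas ?_ ?_ fun n => le_setLIntegral_norm_rpow_image_weightedDilation hhom hlam0 hlam
      (ht0 n) (ht1 n) (hmeas n) (by positivity) hB
  · exact mul_ne_zero (ENNReal.ofReal_pos.2 (by positivity)).ne'
      (measure_closedBall_pos volume q hr0).ne'
  · exact (pairwise_disjoint_on _).2 fun m n hmn =>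
      (disjoint_image_closedBall_weightedDilation ha hr (ht0 n) (hstep m n hmn)).symm
  · intro n
    refine ((image_closedBall_weightedDilation_subset ha hb hc (ht0 n).le (ht1 n) q r).trans
      (closedBall_subset_ball ?_)).trans hεU
    calc t n * (‖q‖ + r) ≤ t₀ * (‖q‖ + r) := by gcongr; exact ht₀t n
      _ ≤ ε / 2 := by
          rw [← le_div_iff₀ (by positivity), div_div]; exact min_le_right _ _
      _ < ε := by linarith

noncomputable def f₂ (d : ℂ) (p : ℂ × ℂ × ℂ) : ℂ :=
  p.1 ^ 4 * p.2.1 ^ 3 + 2 * p.2.2 * p.1 ^ 2 * p.2.1 ^ 4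
    + p.2.2 ^ 2 * p.2.1 ^ 5
    + (d - 1) * p.1 ^ 5 * p.2.1
    + (2 * d ^ 2 + 4 * d - 2) * p.2.2 * p.1 ^ 3 * p.2.1 ^ 2
    + (2 * d ^ 2 + 3 * d - 1) * p.2.2 ^ 2 * p.1 * p.2.1 ^ 3
    + (d ^ 3 - d ^ 2 - d) * p.2.2 * p.1 ^ 4
    + (d ^ 4 + 4 * d ^ 3 + d ^ 2) * p.2.2 ^ 2 * p.1 ^ 2 * p.2.1
    + (d ^ 3 + d ^ 2 + d) * p.2.2 ^ 3 * p.2.1 ^ 2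
    + (d ^ 5 + 3 * d ^ 4 + 3 * d ^ 3 + d ^ 2) * p.2.2 ^ 3 * p.1

theorem continuous_f₂ (d : ℂ) : Continuous (f₂ d) := by
  unfold f₂; fun_prop

theorem f₂_weightedDilation (d : ℂ) (t : ℝ) (p : ℂ × ℂ × ℂ) :
    f₂ d (weightedDilation 2 1 3 t p) = (t : ℂ) ^ 11 * f₂ d p := by
  simp only [f₂, weightedDilation_apply, Complex.real_smul, Complex.ofReal_pow]
  ring

theorem f₂_ne_zero (d : ℂ) : f₂ d ≠ 0 := by
  intro h
  have h1 : f₂ d (1, 1, 0) = d := by simp only [f₂]; ring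
  have h2 : f₂ d (2, 1, 0) = 32 * d - 16 := by simp only [f₂]; ring
  rw [h, Pi.zero_apply] at h1 h2
  rw [← h1] at h2
  norm_num at h2

/-- Non-integrability of `|f₂|^(-2λ)` near the origin for every `λ > 6/11`:
the log canonical threshold of the invariant divisor `{p₀₁₂₄ = 0}` is at most `6/11`.
Here `ℂ³` is identified with `ℂ × ℂ × ℂ` with coordinates `x = p.1`, `y = p.2.1`,
`z = p.2.2`, carrying the (product) Lebesgue measure. -/
theorem stmt_8 (d : ℂ) (lam : ℝ) (hlam : 6 / 11 < lam)
    (U : Set (ℂ × ℂ × ℂ)) (hU : IsOpen U) (h0 : ((0 : ℂ), (0 : ℂ), (0 : ℂ)) ∈ U) :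
    ¬ IntegrableOn
      (fun p : ℂ × ℂ × ℂ =>
        ‖(p.1 ^ 4 * p.2.1 ^ 3 + 2 * p.2.2 * p.1 ^ 2 * p.2.1 ^ 4
            + p.2.2 ^ 2 * p.2.1 ^ 5
            + (d - 1) * p.1 ^ 5 * p.2.1
            + (2 * d ^ 2 + 4 * d - 2) * p.2.2 * p.1 ^ 3 * p.2.1 ^ 2
            + (2 * d ^ 2 + 3 * d - 1) * p.2.2 ^ 2 * p.1 * p.2.1 ^ 3
            + (d ^ 3 - d ^ 2 - d) * p.2.2 * p.1 ^ 4
            + (d ^ 4 + 4 * d ^ 3 + d ^ 2) * p.2.2 ^ 2 * p.1 ^ 2 * p.2.1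
            + (d ^ 3 + d ^ 2 + d) * p.2.2 ^ 3 * p.2.1 ^ 2
            + (d ^ 5 + 3 * d ^ 4 + 3 * d ^ 3 + d ^ 2) * p.2.2 ^ 3 * p.1)‖ ^ (-2 * lam))
      U volume :=
  not_integrableOn_norm_rpow_of_weightedHomogeneous (continuous_f₂ d) (f₂_ne_zero d)
    two_ne_zero one_ne_zero three_ne_zero (fun t _ => f₂_weightedDilation d t)
    (by push_cast; linarith) (hU.mem_nhds h0)
end

section
/- Let n ≥ 1, let f be a nonzero polynomial in n complex variables with f(0) = 0, let w₁, …, wₙ be positive integers (weights assigned to the variables), and let m be the minimum, over all monomials x₁^{α₁}⋯xₙ^{αₙ} occurring with nonzero coefficient in f, of the weighted degree w₁α₁ + ⋯ + wₙαₙ. Then for every real number λ > (w₁ + ⋯ + wₙ)/m and every open neighborhood U of the origin in ℂⁿ, the function z ↦ |f(z)|^{−2λ} is not integrable on U with respect to Lebesgue measure on ℂⁿ ≅ ℝ^{2n}. -/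
/-!
On the weighted polydisc `P(t) = {|zᵢ| ≤ t^wᵢ}` every monomial of `f` is `O(t^m)`, so
`|f| ≤ C t^m` there, while `vol P(t) = πⁿ t^(2 ∑ wᵢ)`. Since the zero set of `f` (where
`0 ^ (-2λ) = 0`) is null, `∫_{P(t)} |f|^(-2λ) ≥ C^(-2λ) πⁿ t^(2 ∑ wᵢ - 2λm)`, which tends to
`∞` as `t → 0⁺` exactly when `λ > (∑ wᵢ)/m`; and `P(t) ⊆ U` for small `t`.
-/

open MeasureTheory MvPolynomial Filter Topology

theorem MvPolynomial.ae_eval_ne_zero {K : Type*} [NormedField K] [MeasurableSpace K]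
    [BorelSpace K] [SecondCountableTopology K] (μ : Measure K) [SigmaFinite μ]
    [NullSingletonClass μ] :
    ∀ {n : ℕ} {f : MvPolynomial (Fin n) K}, f ≠ 0 →
      ∀ᵐ z ∂Measure.pi fun _ : Fin n => μ, eval z f ≠ 0
  | 0, f, hf => by
    refine ae_of_all _ fun z => ?_
    rw [eq_C_of_isEmpty f, ne_eq, C_eq_zero] at hf
    rwa [eq_C_of_isEmpty f, eval_C]
  | n + 1, f, hf => by
    have hlead : (finSuccEquiv K n f).leadingCoeff ≠ 0 := by simpa using hf
    have hcont : Continuous fun q : K × (Fin n → K) => eval (Fin.cons q.1 q.2) f :=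
      (continuous_eval f).comp (continuous_fst.finCons (A := fun _ => K) continuous_snd)
    have hmeas : MeasurableSet {q : K × (Fin n → K) | eval (Fin.cons q.1 q.2) f ≠ 0} :=
      (isOpen_compl_singleton.preimage hcont).measurableSet
    -- Outside a null set of `y`, the polynomial `x ↦ f (x, y)` has nonzero leading coefficient,
    -- hence finitely many roots.
    have hslice : ∀ᵐ y ∂Measure.pi fun _ : Fin n => μ, ∀ᵐ x ∂μ, eval (Fin.cons x y) f ≠ 0 := by
      filter_upwards [ae_eval_ne_zero μ hlead] with y hy
      have hmap : (finSuccEquiv K n f).map (eval y) ≠ 0 := by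
        refine fun h => hy ?_
        rw [Polynomial.leadingCoeff, ← Polynomial.coeff_map, h, Polynomial.coeff_zero]
      refine measure_mono_null (fun x hx => ?_)
        ((Polynomial.finite_setOfPred_isRoot hmap).measure_zero μ)
      simpa [eval_eq_eval_mv_eval'] using hx
    have hprod : ∀ᵐ q ∂μ.prod (Measure.pi fun _ : Fin n => μ), eval (Fin.cons q.1 q.2) f ≠ 0 :=
      (Measure.ae_prod_iff_ae_ae hmeas).2 ((Measure.ae_ae_comm hmeas).2 hslice)
    rw [← (measurePreserving_piFinSuccAbove (fun _ => μ) 0).symm.map_eq,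
      (MeasurableEquiv.piFinSuccAbove _ 0).symm.measurableEmbedding.ae_map_iff]
    simpa [MeasurableEquiv.piFinSuccAbove_symm_apply, Fin.insertNth_zero', Fin.consEquiv]
      using hprod

section WeightedPolydisc

variable {ι : Type*} [Fintype ι] (w : ι → ℕ)

def weightedPolydisc (t : ℝ) : Set (ι → ℂ) :=
  Set.univ.pi fun i => Metric.closedBall 0 (t ^ w i)

theorem volume_weightedPolydisc {t : ℝ} (ht : 0 ≤ t) :
    volume (weightedPolydisc w t) =
      ENNReal.ofReal (Real.pi ^ Fintype.card ι * t ^ (2 * ∑ i, w i)) := by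
  have hball : ∀ i, volume (Metric.closedBall (0 : ℂ) (t ^ w i)) =
      ENNReal.ofReal (Real.pi * t ^ (2 * w i)) := fun i => by
    rw [Complex.volume_closedBall, ← ENNReal.ofReal_pow (by positivity), ← pow_mul',
      ← NNReal.coe_real_pi, ENNReal.ofReal_mul NNReal.pi.coe_nonneg, ENNReal.ofReal_coe_nnreal,
      mul_comm]
  rw [weightedPolydisc, volume_pi_pi, Finset.prod_congr rfl fun i _ => hball i,
    ← ENNReal.ofReal_prod_of_nonneg fun i _ => by positivity, Finset.prod_mul_distrib,
    Finset.prod_const, Finset.prod_pow_eq_pow_sum, Finset.mul_sum, Finset.card_univ]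

theorem eventually_weightedPolydisc_subset (hw : ∀ i, 0 < w i) {U : Set (ι → ℂ)}
    (hU : U ∈ 𝓝 0) : ∀ᶠ t in 𝓝[>] 0, weightedPolydisc w t ⊆ U := by
  obtain ⟨ε, hε, hball⟩ := Metric.mem_nhds_iff.1 hU
  filter_upwards [Ioo_mem_nhdsGT (lt_min one_pos hε)] with t ⟨ht0, ht⟩ z hz
  refine hball (mem_ball_zero_iff.2 ((pi_norm_lt_iff hε).2 fun i => ?_))
  calc ‖z i‖ ≤ t ^ w i := mem_closedBall_zero_iff.1 (hz i trivial)
    _ ≤ t := pow_le_of_le_one ht0.le ((ht.trans_le (min_le_left _ _)).le) (hw i).ne'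
    _ < ε := ht.trans_le (min_le_right _ _)

theorem norm_eval_le_of_mem_weightedPolydisc {f : MvPolynomial ι ℂ} {m : ℕ}
    (hm : ∀ α ∈ f.support, m ≤ ∑ i, w i * α i) {t : ℝ} (ht0 : 0 ≤ t) (ht1 : t ≤ 1)
    {z : ι → ℂ} (hz : z ∈ weightedPolydisc w t) :
    ‖eval z f‖ ≤ (∑ α ∈ f.support, ‖coeff α f‖) * t ^ m := by
  rw [eval_eq', Finset.sum_mul]
  refine (norm_sum_le _ _).trans (Finset.sum_le_sum fun α hα => ?_)
  rw [norm_mul, norm_prod]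
  gcongr
  calc ∏ i, ‖z i ^ α i‖ ≤ ∏ i, (t ^ w i) ^ α i := by
        gcongr with i
        rw [norm_pow]
        exact pow_le_pow_left₀ (norm_nonneg _) (mem_closedBall_zero_iff.1 (hz i trivial)) _
    _ = t ^ ∑ i, w i * α i := by simp_rw [← pow_mul, Finset.prod_pow_eq_pow_sum]
    _ ≤ t ^ m := pow_le_pow_of_le_one ht0 ht1 (hm α hα)

theorem ofReal_rpow_mul_volume_weightedPolydisc {C : ℝ} (hC : 0 ≤ C) (m : ℕ) (s : ℝ) {t : ℝ}
    (ht : 0 < t) :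
    ENNReal.ofReal ((C * t ^ m) ^ s) * volume (weightedPolydisc w t) =
      ENNReal.ofReal
        (C ^ s * Real.pi ^ Fintype.card ι * t ^ ((m : ℝ) * s + ↑(2 * ∑ i, w i))) := by
  rw [volume_weightedPolydisc w ht.le, ← ENNReal.ofReal_mul (by positivity),
    Real.mul_rpow hC (by positivity), ← Real.rpow_natCast t m, ← Real.rpow_mul ht.le,
    Real.rpow_add ht, Real.rpow_natCast]
  ring_nf

end WeightedPolydisc

theorem pos_weightedDegree_of_eval_zero {ι R : Type*} [Fintype ι] [CommSemiring R]
    {f : MvPolynomial ι R} (hf0 : eval 0 f = 0) {w : ι → ℕ} (hw : ∀ i, 0 < w i)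
    {α : ι →₀ ℕ} (hα : α ∈ f.support) : 0 < ∑ i, w i * α i := by
  obtain ⟨i, hi⟩ : ∃ i, α i ≠ 0 := by
    by_contra! h
    rw [show α = 0 from Finsupp.ext h, mem_support_iff] at hα
    exact hα (by rwa [eval_zero] at hf0)
  exact Finset.sum_pos' (fun j _ => by positivity)
    ⟨i, Finset.mem_univ i, Nat.mul_pos (hw i) (Nat.pos_of_ne_zero hi)⟩

theorem ofReal_mul_volume_le_setLIntegral_weightedPolydisc {n : ℕ} (w : Fin n → ℕ)
    {f : MvPolynomial (Fin n) ℂ} (hf : f ≠ 0) {m : ℕ} (hm : ∀ α ∈ f.support, m ≤ ∑ i, w i * α i)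
    {s : ℝ} (hs : s ≤ 0) {t : ℝ} (ht0 : 0 ≤ t) (ht1 : t ≤ 1) :
    ENNReal.ofReal (((∑ α ∈ f.support, ‖coeff α f‖) * t ^ m) ^ s) *
        volume (weightedPolydisc w t) ≤
      ∫⁻ z in weightedPolydisc w t, ‖‖eval z f‖ ^ s‖ₑ := by
  rw [← setLIntegral_const]
  refine setLIntegral_mono_ae
    ((continuous_eval f).norm.measurable.pow_const s).enorm.aemeasurable ?_
  filter_upwards [ae_eval_ne_zero volume hf] with z hz hzP
  rw [Real.enorm_eq_ofReal (by positivity)]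
  exact ENNReal.ofReal_le_ofReal (Real.rpow_le_rpow_of_nonpos (norm_pos_iff.2 hz)
    (norm_eval_le_of_mem_weightedPolydisc w hm ht0 ht1 hzP) hs)

theorem stmt_10_general (n : ℕ) (f : MvPolynomial (Fin n) ℂ) (hf : f ≠ 0)
    (hf0 : MvPolynomial.eval (0 : Fin n → ℂ) f = 0)
    (w : Fin n → ℕ) (hw : ∀ i, 0 < w i) (m : ℕ)
    (hm_le : ∀ α ∈ f.support, m ≤ ∑ i, w i * α i)
    (hm_mem : ∃ α ∈ f.support, ∑ i, w i * α i = m)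
    (lam : ℝ) (hlam : (∑ i, (w i : ℝ)) / (m : ℝ) < lam)
    (U : Set (Fin n → ℂ)) (hU : IsOpen U) (h0 : (0 : Fin n → ℂ) ∈ U) :
    ¬ IntegrableOn
      (fun z : Fin n → ℂ => ‖MvPolynomial.eval z f‖ ^ (-2 * lam))
      U volume := by
  intro hInt
  obtain ⟨α, hα, hαm⟩ := hm_mem
  have hm : (0 : ℝ) < m := by exact_mod_cast hαm ▸ pos_weightedDegree_of_eval_zero hf0 hw hα
  have hexp : (m : ℝ) * (-2 * lam) + ↑(2 * ∑ i, w i) < 0 := by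
    rw [div_lt_iff₀ hm] at hlam
    push_cast
    linarith
  have hs : -2 * lam ≤ 0 := by nlinarith [(by positivity : (0 : ℝ) ≤ ↑(2 * ∑ i, w i))]
  set C := ∑ α ∈ f.support, ‖coeff α f‖
  have hC : 0 < C :=
    Finset.sum_pos (fun α hα => norm_pos_iff.2 (mem_support_iff.1 hα)) (support_nonempty.2 hf)
  have hlim : Tendsto (fun t => ENNReal.ofReal ((C * t ^ m) ^ (-2 * lam)) *
      volume (weightedPolydisc w t)) (𝓝[>] 0) (𝓝 ⊤) :=
    (ENNReal.tendsto_ofReal_atTop.comp ((tendsto_rpow_neg_nhdsGT_zero hexp).const_mul_atTop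
      (by positivity))).congr' (eventually_mem_nhdsWithin.mono fun t ht =>
        (ofReal_rpow_mul_volume_weightedPolydisc w hC.le m _ ht).symm)
  have hbound : ∀ᶠ t in 𝓝[>] 0, ENNReal.ofReal ((C * t ^ m) ^ (-2 * lam)) *
      volume (weightedPolydisc w t) ≤ ∫⁻ z in U, ‖‖eval z f‖ ^ (-2 * lam)‖ₑ := by
    filter_upwards [eventually_weightedPolydisc_subset w hw (hU.mem_nhds h0),
      Ioc_mem_nhdsGT one_pos] with t hsub ⟨ht0, ht1⟩
    exact (ofReal_mul_volume_le_setLIntegral_weightedPolydisc w hf hm_le hs ht0.le ht1).trans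
      (lintegral_mono_set hsub)
  exact hInt.2.ne (top_le_iff.1 (le_of_tendsto hlim hbound))

/-- Analytic form of Kollár's inequality: if `f` is a nonzero polynomial in `n`
complex variables vanishing at the origin, `w i` are positive integer weights, and
`m` is the minimal weighted degree of the monomials occurring in `f`, then for every
`λ > (∑ᵢ wᵢ)/m` the function `|f|^(-2λ)` fails to be integrable on every open
neighborhood of the origin in `ℂⁿ` (with its Lebesgue/product measure). -/
theorem stmt_10 (n : ℕ) (hn : 1 ≤ n) (f : MvPolynomial (Fin n) ℂ) (hf : f ≠ 0)
    (hf0 : MvPolynomial.eval (0 : Fin n → ℂ) f = 0)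
    (w : Fin n → ℕ) (hw : ∀ i, 0 < w i) (m : ℕ)
    (hm_le : ∀ α ∈ f.support, m ≤ ∑ i, w i * α i)
    (hm_mem : ∃ α ∈ f.support, ∑ i, w i * α i = m)
    (lam : ℝ) (hlam : (∑ i, (w i : ℝ)) / (m : ℝ) < lam)
    (U : Set (Fin n → ℂ)) (hU : IsOpen U) (h0 : (0 : Fin n → ℂ) ∈ U) :
    ¬ IntegrableOn
      (fun z : Fin n → ℂ => ‖MvPolynomial.eval z f‖ ^ (-2 * lam))
      U volume :=
  stmt_10_general n f hf hf0 w hw m hm_le hm_mem lam hlam U hU h0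
end

section
/- Let e₀, …, e₆ be the standard basis of ℂ⁷, and let m₀, m₁, m₂, m₃ be vectors in the span of e₄, e₅, e₆. Set v_j = e_j + m_j for j = 0, 1, 2, 3. Then in the exterior algebra of ℂ⁷ one has (v₀ ∧ v₁ ∧ v₂ ∧ v₃) ∧ (e₀ ∧ e₁) = 0 if and only if m₀ ∧ m₁ = 0 (equivalently, if and only if m₀ and m₁ are linearly dependent). -/
/-!
Since `e₀ ∧ e₁` is already a factor, the `e₀` of `v₀` and the `e₁` of `v₁` drop out, and the
product becomes `m₀ ∧ m₁ ∧ v₂ ∧ v₃ ∧ e₀ ∧ e₁`. Over a field a wedge of vectors vanishes exactly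
when they are linearly dependent. Reading off the coordinates `2, 3, 0, 1`, which kill every
`mⱼ`, sends `v₂, v₃, e₀, e₁` to a basis of `ℂ⁴`; so the six vectors are dependent iff `m₀, m₁`
are, i.e. iff `m₀ ∧ m₁ = 0`.
-/

open ExteriorAlgebra

noncomputable def stdBasis (j : Fin 7) : Fin 7 → ℂ := Pi.single j 1

section Field

variable {K E : Type*} [Field K] [AddCommGroup E] [Module K E]

theorem ExteriorAlgebra.ιMulti_ne_zero_of_linearIndependent {n : ℕ} {v : Fin n → E}
    (hv : LinearIndependent K v) : ιMulti K n v ≠ 0 := by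
  have h := (exteriorPower.ιMulti_family_linearIndependent_field (n := n) hv).ne_zero
    (Set.powersetCard.ofFinEmbEquiv (OrderIso.refl (Fin n)).toOrderEmbedding)
  rw [exteriorPower.ιMulti_family, Equiv.symm_apply_apply] at h
  exact fun h0 => h (Subtype.ext h0)

theorem ExteriorAlgebra.ιMulti_eq_zero_iff {n : ℕ} (v : Fin n → E) :
    ιMulti K n v = 0 ↔ ¬ LinearIndependent K v :=
  ⟨fun h hv => ιMulti_ne_zero_of_linearIndependent hv h, (ιMulti K n).map_linearDependent v⟩

theorem ExteriorAlgebra.ι_mul_ι_eq_zero_iff (x y : E) :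
    ι K x * ι K y = 0 ↔ ¬ LinearIndependent K ![x, y] := by
  rw [← ιMulti_eq_zero_iff]
  simp [ιMulti_apply]

end Field

section CommRing

variable {R M : Type*} [CommRing R] [AddCommGroup M] [Module R M]

theorem ExteriorAlgebra.ιMulti_fin_six (x₀ x₁ x₂ x₃ x₄ x₅ : M) :
    ιMulti R 6 ![x₀, x₁, x₂, x₃, x₄, x₅] =
      ι R x₀ * ι R x₁ * ι R x₂ * ι R x₃ * (ι R x₄ * ι R x₅) := by
  simp [ιMulti_apply, mul_assoc]

theorem ExteriorAlgebra.ι_add_mul_ι_add_mul_ι_mul_ι_mul_ι_mul_ι (x y p q z w : M) :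
    ι R (x + p) * ι R (y + q) * ι R z * ι R w * (ι R x * ι R y) =
      ι R p * ι R q * ι R z * ι R w * (ι R x * ι R y) := by
  have repeat_x (a b c d : M) : ι R x * ι R a * ι R b * ι R c * (ι R x * ι R d) = 0 := by
    rw [← ιMulti_fin_six]
    exact (ιMulti R 6).map_eq_zero_of_eq _ (i := 0) (j := 4) rfl (by decide)
  have repeat_y (a b c d : M) : ι R a * ι R y * ι R b * ι R c * (ι R d * ι R y) = 0 := by
    rw [← ιMulti_fin_six]
    exact (ιMulti R 6).map_eq_zero_of_eq _ (i := 1) (j := 5) rfl (by decide)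
  simp only [map_add, add_mul, mul_add, repeat_x, repeat_y, zero_add, add_zero]

end CommRing

theorem linearIndependent_fin_append_iff {R M N : Type*} [Ring R] [AddCommGroup M] [Module R M]
    [AddCommGroup N] [Module R N] {k l : ℕ} {u : Fin k → M} {w : Fin l → M} (f : M →ₗ[R] N)
    (hu : ∀ i, f (u i) = 0) (hw : LinearIndependent R (f ∘ w)) :
    LinearIndependent R (Fin.append u w) ↔ LinearIndependent R u := by
  refine ⟨fun h => by
    simpa [Function.comp_def] using h.comp _ (Fin.castAdd_injective k l), fun hu' => ?_⟩
  rw [Fintype.linearIndependent_iff] at hu' hw ⊢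
  intro g hg
  rw [Fin.sum_univ_add] at hg
  simp only [Fin.append_left, Fin.append_right] at hg
  have hright : ∀ j, g (Fin.natAdd k j) = 0 := hw _ <| by
    simpa [hu] using congrArg f hg
  have hleft : ∀ i, g (Fin.castAdd l i) = 0 := hu' _ <| by
    simpa [hright] using hg
  exact Fin.addCases hleft hright

theorem Pi.apply_eq_zero_of_mem_span_single {R ι : Type*} [Semiring R] [DecidableEq ι]
    {s : Set ι} {m : ι → R} (hm : m ∈ Submodule.span R ((fun i => Pi.single i 1) '' s))
    {j : ι} (hj : j ∉ s) : m j = 0 := by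
  refine (Submodule.span_le (p := LinearMap.ker (LinearMap.proj j)) |>.2 ?_) hm
  rintro _ ⟨i, hi, rfl⟩
  simp [ne_of_mem_of_not_mem hi hj]

/-- Let `e₀, …, e₆` be the standard basis of `ℂ⁷`, let `m₀, m₁, m₂, m₃` lie in the
span of `e₄, e₅, e₆`, and set `vⱼ = eⱼ + mⱼ` for `j = 0, 1, 2, 3`.  Then
`v₀ ∧ v₁ ∧ v₂ ∧ v₃ ∧ e₀ ∧ e₁ = 0` iff `m₀ ∧ m₁ = 0`, which in turn holds iff
`m₀, m₁` are linearly dependent. -/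
theorem stmt_13 (m₀ m₁ m₂ m₃ : Fin 7 → ℂ)
    (h₀ : m₀ ∈ Submodule.span ℂ ({stdBasis 4, stdBasis 5, stdBasis 6} : Set (Fin 7 → ℂ)))
    (h₁ : m₁ ∈ Submodule.span ℂ ({stdBasis 4, stdBasis 5, stdBasis 6} : Set (Fin 7 → ℂ)))
    (h₂ : m₂ ∈ Submodule.span ℂ ({stdBasis 4, stdBasis 5, stdBasis 6} : Set (Fin 7 → ℂ)))
    (h₃ : m₃ ∈ Submodule.span ℂ ({stdBasis 4, stdBasis 5, stdBasis 6} : Set (Fin 7 → ℂ))) :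
    (ExteriorAlgebra.ι ℂ (stdBasis 0 + m₀) * ExteriorAlgebra.ι ℂ (stdBasis 1 + m₁) *
        ExteriorAlgebra.ι ℂ (stdBasis 2 + m₂) * ExteriorAlgebra.ι ℂ (stdBasis 3 + m₃) *
        (ExteriorAlgebra.ι ℂ (stdBasis 0) * ExteriorAlgebra.ι ℂ (stdBasis 1)) = 0
      ↔ ExteriorAlgebra.ι ℂ m₀ * ExteriorAlgebra.ι ℂ m₁ = 0) ∧
    (ExteriorAlgebra.ι ℂ m₀ * ExteriorAlgebra.ι ℂ m₁ = 0
      ↔ ¬ LinearIndependent ℂ ![m₀, m₁]) := by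
  let f : (Fin 7 → ℂ) →ₗ[ℂ] Fin 4 → ℂ := LinearMap.funLeft ℂ ℂ ![2, 3, 0, 1]
  have hf : ∀ m ∈ Submodule.span ℂ ({stdBasis 4, stdBasis 5, stdBasis 6} : Set (Fin 7 → ℂ)),
      f m = 0 := by
    intro m hm
    rw [← Set.image_pair, ← Set.image_insert_eq] at hm
    funext j
    fin_cases j <;> exact Pi.apply_eq_zero_of_mem_span_single hm (by decide)
  have hbasis : f ∘ ![stdBasis 2 + m₂, stdBasis 3 + m₃, stdBasis 0, stdBasis 1] =
      Pi.basisFun ℂ (Fin 4) := by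
    funext j
    fin_cases j <;> simp [hf m₂ h₂, hf m₃ h₃] <;> funext k <;>
      fin_cases k <;> simp [f, stdBasis]
  have hsplit : ![m₀, m₁, stdBasis 2 + m₂, stdBasis 3 + m₃, stdBasis 0, stdBasis 1] =
      Fin.append ![m₀, m₁] ![stdBasis 2 + m₂, stdBasis 3 + m₃, stdBasis 0, stdBasis 1] := by
    ext i
    fin_cases i <;> rfl
  refine ⟨?_, ι_mul_ι_eq_zero_iff m₀ m₁⟩
  rw [ι_add_mul_ι_add_mul_ι_mul_ι_mul_ι_mul_ι, ← ιMulti_fin_six, ιMulti_eq_zero_iff,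
    ι_mul_ι_eq_zero_iff, hsplit, linearIndependent_fin_append_iff f]
  · intro i
    fin_cases i
    exacts [hf m₀ h₀, hf m₁ h₁]
  · exact hbasis ▸ (Pi.basisFun ℂ (Fin 4)).linearIndependent
end

section
/- Let u₀₁, u₋₁₂, u₋₂₃, v₋₁₁, v₋₂₂, v₋₃₃, w₋₁₀, w₋₂₁, w₋₃₂ be nonzero complex numbers, and set τ = (u₋₁₂·v₋₃₃·w₋₂₁)/(u₋₂₃·v₋₁₁·w₋₃₂). Then there exist nonzero complex numbers λ₋₃, λ₋₂, λ₋₁, λ₀, λ₁, λ₂, λ₃ and a nonzero complex number c such that λ₀λ₁u₀₁ = 1, λ₋₁λ₂u₋₁₂ = 1, λ₋₂λ₃u₋₂₃ = 1, λ₋₁λ₀w₋₁₀ = 1, λ₋₂λ₁w₋₂₁ = 1, λ₋₃λ₂w₋₃₂ = 1, c·λ₋₁λ₁v₋₁₁ = 1, and c·λ₋₂λ₂v₋₂₂ = 1. Moreover, for ANY nonzero λ₋₃, …, λ₃ and nonzero c satisfying these eight equations, one necessarily has c·λ₋₃λ₃v₋₃₃ = τ. -/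
/-!
Put `λ₀ = t`. The six `u`/`w` equations and the `v₋₁₁` equation then determine the other
rescalings and `c` as monomials in `t` and the coefficients, and the remaining `v₋₂₂` equation
becomes `t⁴ = u₋₁₂ v₋₁₁ w₋₂₁ / (u₀₁² v₋₂₂ w₋₁₀²)`, solvable over `ℂ`. Conversely,
dividing the product of the `u₋₂₃`, `v₋₁₁`, `w₋₃₂` equations by that of the `u₋₁₂`, `w₋₂₁` ones
cancels every rescaling except `c λ₋₃ λ₃`, leaving `c λ₋₃ λ₃ v₋₃₃ = τ`.
-/

section Normalization

variable {K : Type*} [Field K] {u01 u12 u23 v11 v22 v33 w10 w21 w32 : K}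

theorem exists_normalization_of_pow_four_eq {t : K}
    (ht : t ^ 4 = u12 * v11 * w21 / (u01 ^ 2 * v22 * w10 ^ 2))
    (hu01 : u01 ≠ 0) (hu12 : u12 ≠ 0) (hu23 : u23 ≠ 0) (hv11 : v11 ≠ 0) (hv22 : v22 ≠ 0)
    (hw10 : w10 ≠ 0) (hw21 : w21 ≠ 0) (hw32 : w32 ≠ 0) :
    ∃ lm3 lm2 lm1 l0 l1 l2 l3 c : K,
      lm3 ≠ 0 ∧ lm2 ≠ 0 ∧ lm1 ≠ 0 ∧ l0 ≠ 0 ∧ l1 ≠ 0 ∧ l2 ≠ 0 ∧ l3 ≠ 0 ∧ c ≠ 0 ∧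
      l0 * l1 * u01 = 1 ∧ lm1 * l2 * u12 = 1 ∧ lm2 * l3 * u23 = 1 ∧
      lm1 * l0 * w10 = 1 ∧ lm2 * l1 * w21 = 1 ∧ lm3 * l2 * w32 = 1 ∧
      c * (lm1 * l1) * v11 = 1 ∧ c * (lm2 * l2) * v22 = 1 := by
  have ht0 : t ≠ 0 := by
    rintro rfl
    exact (by positivity : u12 * v11 * w21 / (u01 ^ 2 * v22 * w10 ^ 2) ≠ 0) (by simp [← ht])
  have ht4 : t ^ 4 * (u01 ^ 2 * v22 * w10 ^ 2) = u12 * v11 * w21 := by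
    rw [ht, div_mul_cancel₀ _ (by positivity)]
  refine ⟨u12 / (t * w10 * w32), t * u01 / w21, (t * w10)⁻¹, t, (t * u01)⁻¹, t * w10 / u12,
    w21 / (t * u01 * u23), t ^ 2 * u01 * w10 / v11, ?_⟩
  refine ⟨by positivity, by positivity, by positivity, ht0, by positivity, by positivity,
    by positivity, by positivity, ?_⟩
  field_simp
  simp only [true_and]
  linear_combination ht4

theorem normalization_invariant_eq {lm3 lm2 lm1 l1 l2 l3 c : K}
    (e12 : lm1 * l2 * u12 = 1) (e23 : lm2 * l3 * u23 = 1) (e21 : lm2 * l1 * w21 = 1)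
    (e32 : lm3 * l2 * w32 = 1) (e11 : c * (lm1 * l1) * v11 = 1) :
    c * (lm3 * l3) * v33 = u12 * v33 * w21 / (u23 * v11 * w32) := by
  have hden : u23 * v11 * w32 ≠ 0 :=
    mul_ne_zero (mul_ne_zero (right_ne_zero_of_mul_eq_one e23) (right_ne_zero_of_mul_eq_one e11))
      (right_ne_zero_of_mul_eq_one e32)
  -- `X := c λ₋₃ λ₃ u₋₂₃ v₋₁₁ w₋₃₂` and `Y := u₋₁₂ w₋₂₁` are both inverse to `λ₋₁ λ₁ λ₋₂ λ₂`,
  -- so `X = X (Y λ₋₁ λ₁ λ₋₂ λ₂) = Y`.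
  have hX : lm2 * l3 * u23 * (c * (lm1 * l1) * v11) * (lm3 * l2 * w32) = 1 := by
    rw [e23, e11, e32, one_mul, one_mul]
  have hY : lm1 * l2 * u12 * (lm2 * l1 * w21) = 1 := by
    rw [e12, e21, one_mul]
  rw [eq_div_iff hden]
  linear_combination v33 * (u12 * w21 * hX - c * lm3 * l3 * u23 * v11 * w32 * hY)

end Normalization

theorem stmt_15_general (u01 u12 u23 v11 v22 v33 w10 w21 w32 : ℂ)
    (hu01 : u01 ≠ 0) (hu12 : u12 ≠ 0) (hu23 : u23 ≠ 0)
    (hv11 : v11 ≠ 0) (hv22 : v22 ≠ 0)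
    (hw10 : w10 ≠ 0) (hw21 : w21 ≠ 0) (hw32 : w32 ≠ 0)
    (τ : ℂ) (hτ : τ = u12 * v33 * w21 / (u23 * v11 * w32)) :
    (∃ lm3 lm2 lm1 l0 l1 l2 l3 c : ℂ,
      lm3 ≠ 0 ∧ lm2 ≠ 0 ∧ lm1 ≠ 0 ∧ l0 ≠ 0 ∧ l1 ≠ 0 ∧ l2 ≠ 0 ∧ l3 ≠ 0 ∧ c ≠ 0 ∧
      l0 * l1 * u01 = 1 ∧ lm1 * l2 * u12 = 1 ∧ lm2 * l3 * u23 = 1 ∧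
      lm1 * l0 * w10 = 1 ∧ lm2 * l1 * w21 = 1 ∧ lm3 * l2 * w32 = 1 ∧
      c * (lm1 * l1) * v11 = 1 ∧ c * (lm2 * l2) * v22 = 1) ∧
    (∀ lm3 lm2 lm1 l0 l1 l2 l3 c : ℂ,
      lm3 ≠ 0 → lm2 ≠ 0 → lm1 ≠ 0 → l0 ≠ 0 → l1 ≠ 0 → l2 ≠ 0 → l3 ≠ 0 → c ≠ 0 →
      l0 * l1 * u01 = 1 → lm1 * l2 * u12 = 1 → lm2 * l3 * u23 = 1 →
      lm1 * l0 * w10 = 1 → lm2 * l1 * w21 = 1 → lm3 * l2 * w32 = 1 →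
      c * (lm1 * l1) * v11 = 1 → c * (lm2 * l2) * v22 = 1 →
      c * (lm3 * l3) * v33 = τ) := by
  obtain ⟨t, ht⟩ := IsAlgClosed.exists_pow_nat_eq
    (u12 * v11 * w21 / (u01 ^ 2 * v22 * w10 ^ 2)) (by norm_num : 0 < 4)
  refine ⟨exists_normalization_of_pow_four_eq ht hu01 hu12 hu23 hv11 hv22 hw10 hw21 hw32, ?_⟩
  intro lm3 lm2 lm1 l0 l1 l2 l3 c _ _ _ _ _ _ _ _ _ e12 e23 _ e21 e32 e11 _
  exact hτ ▸ normalization_invariant_eq e12 e23 e21 e32 e11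

/-- Normalization of a ℂ*-invariant 3-plane in `⋀²ℂ⁷`: given nonzero coefficients
`u₀₁, u₋₁₂, u₋₂₃, v₋₁₁, v₋₂₂, v₋₃₃, w₋₁₀, w₋₂₁, w₋₃₂` and
`τ = (u₋₁₂ v₋₃₃ w₋₂₁)/(u₋₂₃ v₋₁₁ w₋₃₂)`, there exist nonzero rescaling factors
`λ₋₃, …, λ₃` and a nonzero `c` satisfying the eight normalization equations; and for
any such rescaling one necessarily has `c·λ₋₃·λ₃·v₋₃₃ = τ`. -/
theorem stmt_15 (u01 u12 u23 v11 v22 v33 w10 w21 w32 : ℂ)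
    (hu01 : u01 ≠ 0) (hu12 : u12 ≠ 0) (hu23 : u23 ≠ 0)
    (hv11 : v11 ≠ 0) (hv22 : v22 ≠ 0) (hv33 : v33 ≠ 0)
    (hw10 : w10 ≠ 0) (hw21 : w21 ≠ 0) (hw32 : w32 ≠ 0)
    (τ : ℂ) (hτ : τ = u12 * v33 * w21 / (u23 * v11 * w32)) :
    (∃ lm3 lm2 lm1 l0 l1 l2 l3 c : ℂ,
      lm3 ≠ 0 ∧ lm2 ≠ 0 ∧ lm1 ≠ 0 ∧ l0 ≠ 0 ∧ l1 ≠ 0 ∧ l2 ≠ 0 ∧ l3 ≠ 0 ∧ c ≠ 0 ∧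
      l0 * l1 * u01 = 1 ∧ lm1 * l2 * u12 = 1 ∧ lm2 * l3 * u23 = 1 ∧
      lm1 * l0 * w10 = 1 ∧ lm2 * l1 * w21 = 1 ∧ lm3 * l2 * w32 = 1 ∧
      c * (lm1 * l1) * v11 = 1 ∧ c * (lm2 * l2) * v22 = 1) ∧
    (∀ lm3 lm2 lm1 l0 l1 l2 l3 c : ℂ,
      lm3 ≠ 0 → lm2 ≠ 0 → lm1 ≠ 0 → l0 ≠ 0 → l1 ≠ 0 → l2 ≠ 0 → l3 ≠ 0 → c ≠ 0 →
      l0 * l1 * u01 = 1 → lm1 * l2 * u12 = 1 → lm2 * l3 * u23 = 1 →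
      lm1 * l0 * w10 = 1 → lm2 * l1 * w21 = 1 → lm3 * l2 * w32 = 1 →
      c * (lm1 * l1) * v11 = 1 → c * (lm2 * l2) * v22 = 1 →
      c * (lm3 * l3) * v33 = τ) :=
  stmt_15_general u01 u12 u23 v11 v22 v33 w10 w21 w32 hu01 hu12 hu23 hv11 hv22 hw10 hw21 hw32 τ hτ
end

section
/- In the polynomial ring ℂ[a,b,c], let P₄ = 32a⁴ + 16a²b² − 8abc² + c⁴, and let s ∈ ℂ satisfy s² = −32. Then: (1) P₄ = (c² − 4ab)² + 32a⁴; (2) P₄ factors as P₄ = (c² − 4ab + s·a²)·(c² − 4ab − s·a²); and (3) the set of common zeros in ℂ³ of the two quadratic forms q₊ = c² − 4ab + s·a² and q₋ = c² − 4ab − s·a² is exactly the line {(0, b, 0) : b ∈ ℂ}. In particular the plane quartic {P₄ = 0} ⊂ ℙ² is the union of two conics meeting at the single point [0:1:0]. -/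
open MvPolynomial

/-- The quartic `P₄ = 32a⁴ + 16a²b² − 8abc² + c⁴` associated to the threefold `V^m`,
with `a = X 0`, `b = X 1`, `c = X 2`. -/
noncomputable def P₄ : MvPolynomial (Fin 3) ℂ :=
  C 32 * X 0 ^ 4 + C 16 * X 0 ^ 2 * X 1 ^ 2 - C 8 * X 0 * X 1 * X 2 ^ 2 + X 2 ^ 4

/-- For `s` with `s² = −32`: (1) `P₄ = (c² − 4ab)² + 32a⁴`;
(2) `P₄ = (c² − 4ab + s·a²)(c² − 4ab − s·a²)`; and (3) the common zero locus in `ℂ³`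
of the two conics is exactly the line `{(0, b, 0)}` — the quartic is a union of two
conics tangent at a single point. -/
theorem stmt_17 (s : ℂ) (hs : s ^ 2 = -32) :
    P₄ = (X 2 ^ 2 - C 4 * X 0 * X 1) ^ 2 + C 32 * X 0 ^ 4 ∧
    P₄ = (X 2 ^ 2 - C 4 * X 0 * X 1 + C s * X 0 ^ 2) *
          (X 2 ^ 2 - C 4 * X 0 * X 1 - C s * X 0 ^ 2) ∧
    {p : ℂ × ℂ × ℂ | p.2.2 ^ 2 - 4 * p.1 * p.2.1 + s * p.1 ^ 2 = 0 ∧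
        p.2.2 ^ 2 - 4 * p.1 * p.2.1 - s * p.1 ^ 2 = 0}
      = {p : ℂ × ℂ × ℂ | ∃ b : ℂ, p = (0, b, 0)} := by
  have hs0 : s ≠ 0 := by
    intro h; rw [h] at hs; norm_num at hs
  refine ⟨?_, ?_, ?_⟩
  · unfold P₄; simp only [map_ofNat]; ring
  · unfold P₄
    have h : (C s : MvPolynomial (Fin 3) ℂ) ^ 2 = -32 := by
      rw [← map_pow, hs, map_neg, map_ofNat]
    simp only [map_ofNat]
    linear_combination ((X 0:MvPolynomial (Fin 3) ℂ) ^ 4) * h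
  · ext ⟨a, b, c⟩
    simp only [Set.mem_setOf_eq]
    constructor
    · rintro ⟨h1, h2⟩
      have ha : a = 0 := by
        have h3 : 2 * s * a ^ 2 = 0 := by linear_combination h1 - h2
        have : a ^ 2 = 0 := by
          rcases mul_eq_zero.mp h3 with h | h
          · rcases mul_eq_zero.mp h with h' | h'
            · norm_num at h'
            · exact absurd h' hs0
          · exact h
        exact pow_eq_zero_iff (n := 2) (by norm_num) |>.mp this
      have hc : c = 0 := by
        have : c ^ 2 = 0 := by rw [ha] at h1; linear_combination h1
        exact pow_eq_zero_iff (n := 2) (by norm_num) |>.mp this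
      exact ⟨b, by simp [ha, hc]⟩
    · rintro ⟨b', hb⟩
      simp only [Prod.mk.injEq] at hb
      obtain ⟨ha, hb', hc⟩ := hb
      subst ha; subst hc
      norm_num
end
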